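/- Let n ≥ 2 and 1 ≤ n₁ < n be integers. Let S be the following finite set of ℝ-linear endomorphisms of A = ℝ[x₁,…,xₙ]: f ↦ −x_i·∂f/∂x_r for 1 ≤ i < r ≤ n₁; f ↦ −x_i·x_s·f for 1 ≤ i ≤ n₁ < s ≤ n; and f ↦ x_s·∂f/∂x_j for n₁ < j < s ≤ n. For a polynomial v ∈ A and k ∈icons ℕ, let W_k(v) be the ℝ-linear span of all polynomials T₁(T₂(⋯T_j(v)⋯)) with 0 ≤ j ≤ k and T₁,…,T_j ∈ S. Then: (i) for every integer m₁ ≥ 1, with v = x_{n₁}^{m₁}, there exist real constants c₁, c₂ > 0 and K ∈ ℕ such that c₁·k^{n−1} ≤ dim W_k(v) ≤ c₂·k^{n−1} for all k ≥ K; and (ii) for every m₂ ∈ ℕ, the same conclusion holds with v = x_{n₁+1}^{m₂}. -/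

import Mathlib

open MvPolynomial

/-- Multiplication by a polynomial, as an ℝ-linear endomorphism. -/
noncomputable def mulE {σ : Type} (a : MvPolynomial σ ℝ) :
    Module.End ℝ (MvPolynomial σ ℝ) := LinearMap.mulLeft ℝ a

/-- Formal partial derivative ∂/∂v, as an ℝ-linear endomorphism. -/
noncomputable def pdE {σ : Type} [DecidableEq σ] (v : σ) :
    Module.End ℝ (MvPolynomial σ ℝ) := (pderiv v).toLinearMap

/-- The set S of negative-root-vector endomorphisms of A = ℝ[x₁,…,xₙ] for Howe's
non-canonical oscillator representation associated to n₁ (0-based indexing: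
1 ≤ i < r ≤ n₁ becomes i < r, r.val < n₁; 1 ≤ i ≤ n₁ < s ≤ n becomes
i.val < n₁ ≤ s.val; n₁ < j < s ≤ n becomes n₁ ≤ j.val, j < s). -/
def Sset (n n₁ : ℕ) : Set (Module.End ℝ (MvPolynomial (Fin n) ℝ)) :=
  {T | (∃ i r : Fin n, i < r ∧ r.val < n₁ ∧
          T = -(mulE (X i) * pdE r)) ∨
       (∃ i s : Fin n, i.val < n₁ ∧ n₁ ≤ s.val ∧
          T = -mulE (X i * X s)) ∨
       (∃ j s : Fin n, n₁ ≤ j.val ∧ j < s ∧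
          T = mulE (X s) * pdE j)}

/-- W_k(v): span of all T₁(T₂(⋯T_j(v)⋯)) with 0 ≤ j ≤ k, T's in S. -/
noncomputable def Wk (n : ℕ) (S : Set (Module.End ℝ (MvPolynomial (Fin n) ℝ)))
    (v : MvPolynomial (Fin n) ℝ) (k : ℕ) : Submodule ℝ (MvPolynomial (Fin n) ℝ) :=
  Submodule.span ℝ
    {f | ∃ l : List (Module.End ℝ (MvPolynomial (Fin n) ℝ)),
      l.length ≤ k ∧ (∀ T ∈ l, T ∈ S) ∧ f = l.prod v}

/-!
Give the first `n₁` variables weight `-1` and the others weight `+1`. Every operator in `S`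
preserves the weight of a monomial and raises its degree by at most `2`, so `W_k(x_p^m)` lies in
the span of the monomials of the weight of `x_p^m` and degree at most `m + 2k`. On a weight level
set one exponent is determined by the others, so there are at most `(m + 2k + 1)^(n-1)` of them.

Conversely, each operator `-x_i x_s` multiplies by one variable of each weight, so `k` of them
reach every `x^α x_p^m` with `α` of weight `0` and degree at most `2k`. These `α` are still of
order `k^(n-1)` in number: let all exponents but one of weight `+1` range over a box of side of
order `k`, and shift one exponent of weight `-1` by a constant so that the last exponent can
restore weight zero.
-/

namespace HoweOscillator

open Finsupp

section Counting

variable {σ : Type*}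

def levelSet (w : σ → ℤ) (c : ℤ) (d : ℕ) : Set (σ →₀ ℕ) :=
  {α | weight w α = c ∧ degree α ≤ d}

lemma levelSet_mono (w : σ → ℤ) (c : ℤ) {d d' : ℕ} (h : d ≤ d') :
    levelSet w c d ⊆ levelSet w c d' :=
  fun _ hα => ⟨hα.1, hα.2.trans h⟩

lemma exists_neg_of_weight_eq_zero {w : σ → ℤ} (hw : ∀ i, w i ≠ 0) {α : σ →₀ ℕ}
    (hα : weight w α = 0) (hne : α ≠ 0) : ∃ i, w i < 0 ∧ α i ≠ 0 := by
  by_contra! h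
  have hpos : 0 < weight w α := by
    rw [weight_apply, Finsupp.sum]
    refine Finset.sum_pos (fun i hi => ?_) (support_nonempty_iff.2 hne)
    have hwi : 0 ≤ w i := not_lt.1 fun hneg => mem_support_iff.1 hi (h i hneg)
    rw [nsmul_eq_mul]
    exact mul_pos (Nat.cast_pos.2 (Nat.pos_of_ne_zero (mem_support_iff.1 hi)))
      (hwi.lt_of_ne (hw i).symm)
  omega

lemma exists_pos_of_weight_eq_zero {w : σ → ℤ} (hw : ∀ i, w i ≠ 0) {α : σ →₀ ℕ}
    (hα : weight w α = 0) (hne : α ≠ 0) : ∃ i, 0 < w i ∧ α i ≠ 0 := by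
  have hα' : weight (-w) α = 0 := by
    simpa [weight_apply, Finsupp.sum, Finset.sum_neg_distrib] using hα
  simpa using exists_neg_of_weight_eq_zero (w := -w) (by simpa using hw) hα' hne

variable [Fintype σ]

lemma levelSet_finite (w : σ → ℤ) (c : ℤ) (d : ℕ) : (levelSet w c d).Finite :=
  (finite_of_degree_le d).subset fun _ hα => hα.2

lemma weight_eq_sum_mul (w : σ → ℤ) (α : σ →₀ ℕ) : weight w α = ∑ i, (α i : ℤ) * w i := by
  simp [weight_eq_sum]

lemma abs_weight_le_degree {w : σ → ℤ} (hw : ∀ i, |w i| ≤ 1) (α : σ →₀ ℕ) :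
    |weight w α| ≤ degree α := by
  rw [weight_eq_sum_mul, degree_eq_sum, Nat.cast_sum]
  refine (Finset.abs_sum_le_sum_abs _ _).trans (Finset.sum_le_sum fun i _ => ?_)
  rw [abs_mul, Nat.abs_cast]
  exact mul_le_of_le_one_right (Nat.cast_nonneg _) (hw i)

lemma degree_le_card_mul {M : ℕ} {α : σ →₀ ℕ} (h : ∀ i, α i ≤ M) :
    degree α ≤ Fintype.card σ * M := by
  rw [degree_eq_sum]
  simpa using Finset.sum_le_sum fun i (_ : i ∈ Finset.univ) => h i

lemma eq_of_weight_eq_of_forall_ne {w : σ → ℤ} {j : σ} (hj : w j ≠ 0) {α β : σ →₀ ℕ}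
    (hw : weight w α = weight w β) (hoff : ∀ i ≠ j, α i = β i) : α = β := by
  have hsum : ∑ i, ((α i : ℤ) - β i) * w i = ((α j : ℤ) - β j) * w j :=
    Finset.sum_eq_single j (fun i _ hi => by simp [hoff i hi]) (by simp)
  have hzero : ((α j : ℤ) - β j) * w j = 0 := by
    rw [← hsum]
    simp only [sub_mul, Finset.sum_sub_distrib, ← weight_eq_sum_mul, hw, sub_self]
  ext i
  by_cases hi : i = j
  · subst hi; have := (mul_eq_zero.1 hzero).resolve_right hj; omega
  · exact hoff i hi

lemma ncard_levelSet_le {w : σ → ℤ} {j : σ} (hj : w j ≠ 0) (c : ℤ) (d : ℕ) :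
    (levelSet w c d).ncard ≤ (d + 1) ^ (Fintype.card σ - 1) := by
  classical
  let restrict : levelSet w c d → ({i // i ≠ j} → Fin (d + 1)) := fun α i =>
    ⟨α.1 i, Nat.lt_succ_of_le ((le_degree _ _).trans α.2.2)⟩
  have hinj : Function.Injective restrict := fun α β h =>
    Subtype.ext <| eq_of_weight_eq_of_forall_ne hj (α.2.1.trans β.2.1.symm) fun i hi =>
      congrArg Fin.val (congrFun h ⟨i, hi⟩)
  calc (levelSet w c d).ncard = Nat.card (levelSet w c d) := (Nat.card_coe_set_eq _).symm
    _ ≤ Nat.card ({i // i ≠ j} → Fin (d + 1)) := Nat.card_le_card_of_injective _ hinj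
    _ = (d + 1) ^ (Fintype.card σ - 1) := by
      simp [Nat.card_eq_fintype_card, Fintype.card_subtype_compl]

lemma pow_le_ncard_levelSet {w : σ → ℤ} (hw : ∀ i, |w i| ≤ 1) {p q : σ}
    (hp : w p = -1) (hq : w q = 1) (M : ℕ) :
    M ^ (Fintype.card σ - 1) ≤ (levelSet w 0 (4 * (Fintype.card σ * M))).ncard := by
  classical
  set N := Fintype.card σ * M
  let γ : ({i // i ≠ q} → Fin M) → σ →₀ ℕ := fun u =>
    equivFunOnFinite.symm fun i => if h : i = q then 0 else u ⟨i, h⟩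
  have hγ (u) : degree (γ u) ≤ N := degree_le_card_mul fun i => by
    simp only [γ, coe_equivFunOnFinite_symm]; split_ifs <;> omega
  have hwγ (u) : weight w (γ u) ≤ N := (le_abs_self _).trans <|
    (abs_weight_le_degree hw _).trans (by exact_mod_cast hγ u)
  -- raising the exponent at `p` by `N` leaves room to restore weight zero at `q`
  let α : ({i // i ≠ q} → Fin M) → levelSet w 0 (4 * N) := fun u =>
    ⟨γ u + single p N + single q (N - weight w (γ u)).toNat, by
      have := Int.toNat_of_nonneg (sub_nonneg.2 (hwγ u))
      have := neg_abs_le (weight w (γ u))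
      have := abs_weight_le_degree hw (γ u)
      have := hγ u
      refine ⟨?_, ?_⟩
      · simp only [map_add, weight_single, hp, hq, nsmul_eq_mul]
        omega
      · simp only [map_add, degree_single]
        omega⟩
  have hpq : p ≠ q := by rintro rfl; omega
  have hinj : Function.Injective α := by
    intro u v h
    funext i
    have := DFunLike.congr_fun (congrArg Subtype.val h) i.1
    simp only [α, γ, Finsupp.coe_add, coe_equivFunOnFinite_symm, Pi.add_apply, single_apply,
      dif_neg i.2, if_neg i.2.symm, Subtype.coe_eta] at this
    exact Fin.ext (by split_ifs at this <;> omega)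
  calc M ^ (Fintype.card σ - 1) = Nat.card ({i // i ≠ q} → Fin M) := by
        simp [Nat.card_eq_fintype_card, Fintype.card_subtype_compl]
    _ ≤ Nat.card (levelSet w 0 (4 * N)) :=
        have := (levelSet_finite w 0 (4 * N)).to_subtype
        Nat.card_le_card_of_injective _ hinj
    _ = _ := Nat.card_coe_set_eq _

end Counting

section Filtration

variable {n : ℕ} {S : Set (Module.End ℝ (MvPolynomial (Fin n) ℝ))} {v : MvPolynomial (Fin n) ℝ}

lemma self_mem_Wk (k : ℕ) : v ∈ Wk n S v k :=
  Submodule.subset_span ⟨[], Nat.zero_le _, by simp, by simp⟩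

lemma apply_mem_Wk_succ {T : Module.End ℝ (MvPolynomial (Fin n) ℝ)} (hT : T ∈ S) {k : ℕ}
    {f : MvPolynomial (Fin n) ℝ} (hf : f ∈ Wk n S v k) : T f ∈ Wk n S v (k + 1) := by
  suffices Wk n S v k ≤ (Wk n S v (k + 1)).comap T from this hf
  rw [Wk, Submodule.span_le]
  rintro _ ⟨l, hl, hlS, rfl⟩
  exact Submodule.subset_span
    ⟨T :: l, by simpa using hl, by simpa [hT] using hlS, by simp [Module.End.mul_apply]⟩

lemma Wk_le_of_apply_mem_succ {N : ℕ → Submodule ℝ (MvPolynomial (Fin n) ℝ)} (hN : Monotone N)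
    (hv : v ∈ N 0)
    (hS : ∀ T ∈ S, ∀ j, ∀ f ∈ N j, T f ∈ N (j + 1)) (k : ℕ) : Wk n S v k ≤ N k := by
  have hprod (l : List (Module.End ℝ (MvPolynomial (Fin n) ℝ))) (hlS : ∀ T ∈ l, T ∈ S) :
      l.prod v ∈ N l.length := by
    induction l with
    | nil => simpa using hv
    | cons T l ih =>
      simpa [Module.End.mul_apply] using
        hS T (hlS T (by simp)) _ _ (ih fun T' hT' => hlS T' (by simp [hT']))
  rw [Wk, Submodule.span_le]
  rintro _ ⟨l, hl, hlS, rfl⟩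
  exact hN hl (hprod l hlS)

end Filtration

def GrowsLikePow (f : ℕ → ℝ) (e : ℕ) : Prop :=
  ∃ c₁ c₂ : ℝ, 0 < c₁ ∧ 0 < c₂ ∧ ∃ K : ℕ, ∀ k ≥ K,
    c₁ * (k : ℝ) ^ e ≤ f k ∧ f k ≤ c₂ * (k : ℝ) ^ e

lemma growsLikePow_of_bounds {f : ℕ → ℕ} {e b C : ℕ} (hC : 0 < C)
    (hlow : ∀ M k, C * M ≤ k → M ^ e ≤ f k) (hup : ∀ k, f k ≤ (b + 2 * k + 1) ^ e) :
    GrowsLikePow (fun k => f k) e := by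
  refine ⟨(2 * C : ℝ)⁻¹ ^ e, 3 ^ e, by positivity, by positivity, max (b + 1) C,
    fun k hk => ⟨?_, ?_⟩⟩
  · have hM : 1 ≤ k / C := (Nat.one_le_div_iff hC).2 (le_of_max_le_right hk)
    have hk : k ≤ 2 * C * (k / C) := by
      have := Nat.lt_mul_div_succ k hC
      nlinarith
    calc (2 * C : ℝ)⁻¹ ^ e * (k : ℝ) ^ e = ((2 * C : ℝ)⁻¹ * k) ^ e := (mul_pow _ _ _).symm
      _ ≤ ((k / C : ℕ) : ℝ) ^ e := by
        refine pow_le_pow_left₀ (by positivity) ?_ e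
        rw [inv_mul_le_iff₀ (by positivity)]
        exact_mod_cast hk
      _ ≤ f k := by exact_mod_cast hlow _ _ (Nat.mul_div_le k C)
  · have hk : b + 2 * k + 1 ≤ 3 * k := by have := le_of_max_le_left hk; omega
    calc (f k : ℝ) ≤ ((3 * k : ℕ) : ℝ) ^ e := by
          exact_mod_cast (hup k).trans (Nat.pow_le_pow_left hk e)
      _ = 3 ^ e * (k : ℝ) ^ e := by push_cast; exact mul_pow _ _ _

section Monomials

variable {σ R : Type*} [CommSemiring R]

lemma X_mul_pderiv_monomial_mem [DecidableEq σ] {w : σ → ℤ} {i r : σ} (h : w i = w r) {c : ℤ}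
    {d : ℕ} {α : σ →₀ ℕ} (hα : α ∈ levelSet w c d) (a : R) :
    X i * pderiv r (monomial α a) ∈ restrictSupport R (levelSet w c d) := by
  rw [pderiv_monomial, ← pow_one (X i), ← monomial_single_add, monomial_mem_restrictSupport]
  by_cases hr : α r = 0
  · simp [hr]
  obtain ⟨β, rfl⟩ := exists_add_of_le (single_le_iff.2 (Nat.one_le_iff_ne_zero.2 hr))
  obtain ⟨hw, hd⟩ := hα
  rw [add_tsub_cancel_left]
  simp only [map_add, weight_single, degree_single] at hw hd
  exact Or.inl ⟨by simpa only [map_add, weight_single, h] using hw, by simpa using hd⟩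

lemma X_mul_X_mul_monomial (i s : σ) (α : σ →₀ ℕ) (a : R) :
    X i * X s * monomial α a = monomial (single i 1 + single s 1 + α) a := by
  rw [add_assoc, monomial_single_add, monomial_single_add, pow_one, pow_one, mul_assoc]

lemma finrank_restrictSupport [StrongRankCondition R] (s : Set (σ →₀ ℕ)) :
    Module.finrank R (restrictSupport R s) = s.ncard :=
  Module.finrank_eq_nat_card_basis (basisRestrictSupport R s)

lemma finite_restrictSupport {s : Set (σ →₀ ℕ)} (hs : s.Finite) :
    Module.Finite R (restrictSupport R s) :=
  have := hs.to_subtype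
  .of_basis (basisRestrictSupport R s)

end Monomials

section Oscillator

variable {n n₁ : ℕ}

def oscillatorWeight (n n₁ : ℕ) (i : Fin n) : ℤ := if (i : ℕ) < n₁ then -1 else 1

lemma oscillatorWeight_ne_zero (i : Fin n) : oscillatorWeight n n₁ i ≠ 0 := by
  unfold oscillatorWeight; split_ifs <;> simp

lemma abs_oscillatorWeight_le_one (i : Fin n) : |oscillatorWeight n n₁ i| ≤ 1 := by
  unfold oscillatorWeight; split_ifs <;> simp

lemma apply_mem_restrictSupport_levelSet {T : Module.End ℝ (MvPolynomial (Fin n) ℝ)}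
    (hT : T ∈ Sset n n₁) {c : ℤ} {d : ℕ} {f : MvPolynomial (Fin n) ℝ}
    (hf : f ∈ restrictSupport ℝ (levelSet (oscillatorWeight n n₁) c d)) :
    T f ∈ restrictSupport ℝ (levelSet (oscillatorWeight n n₁) c (d + 2)) := by
  suffices restrictSupport ℝ (levelSet (oscillatorWeight n n₁) c d) ≤
      (restrictSupport ℝ (levelSet (oscillatorWeight n n₁) c (d + 2))).comap T from this hf
  rw [restrictSupport_eq_span, Submodule.span_le]
  rintro _ ⟨α, hα, rfl⟩
  rw [SetLike.mem_coe, Submodule.mem_comap]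
  have hmono :=
    restrictSupport_mono ℝ (levelSet_mono (oscillatorWeight n n₁) c (d.le_add_right 2))
  rcases hT with ⟨i, r, hir, hr, rfl⟩ | ⟨i, s, hi, hs, rfl⟩ | ⟨j, s, hj, hjs, rfl⟩
  · have hw : oscillatorWeight n n₁ i = oscillatorWeight n n₁ r := by
      simp [oscillatorWeight, hr, Fin.lt_def.1 hir |>.trans hr]
    exact neg_mem (hmono (X_mul_pderiv_monomial_mem hw hα 1))
  · obtain ⟨hw, hd⟩ := hα
    have : (-mulE (X i * X s)) (monomial α 1) =
        -monomial (single i 1 + single s 1 + α) (1 : ℝ) := by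
      simp only [mulE, LinearMap.neg_apply, LinearMap.mulLeft_apply, X_mul_X_mul_monomial]
    rw [this]
    refine neg_mem ((monomial_mem_restrictSupport ℝ).2 (Or.inl ⟨?_, ?_⟩))
    · simp [weight_single, oscillatorWeight, hi, hs.not_gt, hw]
    · simp only [map_add, degree_single]; omega
  · have hw : oscillatorWeight n n₁ s = oscillatorWeight n n₁ j := by
      simp [oscillatorWeight, hj.not_gt, (hj.trans (Fin.lt_def.1 hjs).le).not_gt]
    exact hmono (X_mul_pderiv_monomial_mem hw hα 1)

lemma Wk_le_restrictSupport (p : Fin n) (m k : ℕ) :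
    Wk n (Sset n n₁) (X p ^ m) k ≤ restrictSupport ℝ
      (levelSet (oscillatorWeight n n₁) ((m : ℤ) * oscillatorWeight n n₁ p) (m + 2 * k)) := by
  refine Wk_le_of_apply_mem_succ (N := fun j => restrictSupport ℝ (levelSet _ _ (m + 2 * j)))
    (fun _ _ h => restrictSupport_mono ℝ (levelSet_mono _ _ (by omega))) ?_
    (fun _ hT _ _ hf => apply_mem_restrictSupport_levelSet hT hf) k
  rw [X_pow_eq_monomial]
  exact (monomial_mem_restrictSupport ℝ).2 (Or.inl ⟨by simp [weight_single], by simp⟩)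

lemma monomial_add_mem_Wk (p : Fin n) (m : ℕ) {k : ℕ} {α : Fin n →₀ ℕ}
    (hα : α ∈ levelSet (oscillatorWeight n n₁) 0 (2 * k)) :
    monomial (α + single p m) (1 : ℝ) ∈ Wk n (Sset n n₁) (X p ^ m) k := by
  induction k generalizing α with
  | zero =>
    obtain rfl : α = 0 := (degree_eq_zero_iff α).1 (by simpa using hα.2)
    simpa [X_pow_eq_monomial] using self_mem_Wk 0
  | succ k ih =>
    rcases eq_or_ne α 0 with rfl | hne
    · simpa [X_pow_eq_monomial] using self_mem_Wk (k + 1)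
    obtain ⟨i, hi, hαi⟩ := exists_neg_of_weight_eq_zero oscillatorWeight_ne_zero hα.1 hne
    obtain ⟨s, hs, hαs⟩ := exists_pos_of_weight_eq_zero oscillatorWeight_ne_zero hα.1 hne
    have hi' : (i : ℕ) < n₁ := by by_contra h; simp [oscillatorWeight, h] at hi
    have hs' : n₁ ≤ (s : ℕ) := by by_contra h; simp [oscillatorWeight, not_le.1 h] at hs
    have his : i ≠ s := by rintro rfl; omega
    have hle : single i 1 + single s 1 ≤ α := by
      intro j
      by_cases h₁ : i = j <;> by_cases h₂ : s = j <;> subst_vars <;> simp_all <;> omega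
    obtain ⟨β, rfl⟩ := exists_add_of_le hle
    have hβ : β ∈ levelSet (oscillatorWeight n n₁) 0 (2 * k) := by
      obtain ⟨hw, hd⟩ := hα
      simp only [map_add, weight_single, degree_single] at hw hd
      refine ⟨?_, by omega⟩
      simp only [oscillatorWeight, if_pos hi', if_neg hs'.not_gt] at hw
      simpa using hw
    have hT : -mulE (X i * X s) ∈ Sset n n₁ := Or.inr (Or.inl ⟨i, s, hi', hs', rfl⟩)
    have := apply_mem_Wk_succ hT (ih hβ)
    simp only [mulE, LinearMap.neg_apply, LinearMap.mulLeft_apply, X_mul_X_mul_monomial,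
      neg_mem_iff, ← add_assoc] at this
    exact this

lemma finite_Wk (p : Fin n) (m k : ℕ) : Module.Finite ℝ (Wk n (Sset n n₁) (X p ^ m) k) :=
  have := finite_restrictSupport (R := ℝ) (levelSet_finite (oscillatorWeight n n₁)
    ((m : ℤ) * oscillatorWeight n n₁ p) (m + 2 * k))
  Submodule.finiteDimensional_of_le (Wk_le_restrictSupport p m k)

lemma finrank_Wk_le (p : Fin n) (m k : ℕ) :
    Module.finrank ℝ (Wk n (Sset n n₁) (X p ^ m) k) ≤ (m + 2 * k + 1) ^ (n - 1) := by
  set s := levelSet (oscillatorWeight n n₁) ((m : ℤ) * oscillatorWeight n n₁ p) (m + 2 * k)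
  have := finite_restrictSupport (R := ℝ) (levelSet_finite _ _ _ : s.Finite)
  calc Module.finrank ℝ (Wk n (Sset n n₁) (X p ^ m) k)
      ≤ Module.finrank ℝ (restrictSupport ℝ s) :=
        Submodule.finrank_mono (Wk_le_restrictSupport p m k)
    _ ≤ (m + 2 * k + 1) ^ (n - 1) := by
      rw [finrank_restrictSupport]
      simpa using ncard_levelSet_le (oscillatorWeight_ne_zero p) _ (m + 2 * k)

lemma pow_le_finrank_Wk (h1 : 1 ≤ n₁) (h2 : n₁ < n) (p : Fin n) (m : ℕ) {M k : ℕ}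
    (hMk : 2 * n * M ≤ k) : M ^ (n - 1) ≤ Module.finrank ℝ (Wk n (Sset n n₁) (X p ^ m) k) := by
  set s := levelSet (oscillatorWeight n n₁) 0 (2 * k)
  have hsub : restrictSupport ℝ ((· + single p m) '' s) ≤ Wk n (Sset n n₁) (X p ^ m) k := by
    rw [restrictSupport_eq_span, Submodule.span_le]
    rintro _ ⟨_, ⟨α, hα, rfl⟩, rfl⟩
    exact monomial_add_mem_Wk p m hα
  have hcount : M ^ (n - 1) ≤ s.ncard := by
    have hp : oscillatorWeight n n₁ ⟨0, by omega⟩ = -1 := if_pos h1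
    have hq : oscillatorWeight n n₁ ⟨n - 1, by omega⟩ = 1 := if_neg (by simp; omega)
    have := pow_le_ncard_levelSet abs_oscillatorWeight_le_one hp hq M
    rw [Fintype.card_fin] at this
    exact this.trans
      (Set.ncard_le_ncard (levelSet_mono _ _ (by linarith)) (levelSet_finite _ _ _))
  have := finite_Wk (n₁ := n₁) p m k
  calc M ^ (n - 1) ≤ s.ncard := hcount
    _ = ((· + single p m) '' s).ncard :=
        (Set.ncard_image_of_injective s (add_left_injective _)).symm
    _ = Module.finrank ℝ (restrictSupport ℝ ((· + single p m) '' s)) :=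
        (finrank_restrictSupport _).symm
    _ ≤ _ := Submodule.finrank_mono hsub

lemma growsLikePow_finrank_Wk (h1 : 1 ≤ n₁) (h2 : n₁ < n) (p : Fin n) (m : ℕ) :
    GrowsLikePow (fun k => Module.finrank ℝ (Wk n (Sset n n₁) (X p ^ m) k)) (n - 1) :=
  growsLikePow_of_bounds (C := 2 * n) (by omega) (fun _ _ => pow_le_finrank_Wk h1 h2 p m)
    (finrank_Wk_le p m)

end Oscillator

end HoweOscillator

/-- (i) v = x_{n₁}^{m₁} (0-based index n₁−1) for m₁ ≥ 1, and
(ii) v = x_{n₁+1}^{m₂} (0-based index n₁) for m₂ ∈ ℕ; both spans grow like k^{n−1}. -/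
theorem stmt_16 (n n₁ : ℕ) (h1 : 1 ≤ n₁) (h2 : n₁ < n) :
    (∀ m₁ : ℕ, 1 ≤ m₁ →
      ∃ c₁ c₂ : ℝ, 0 < c₁ ∧ 0 < c₂ ∧ ∃ K : ℕ, ∀ k ≥ K,
        c₁ * (k : ℝ) ^ (n - 1) ≤
          (Module.finrank ℝ (Wk n (Sset n n₁)
            (X (⟨n₁ - 1, by omega⟩ : Fin n) ^ m₁) k) : ℝ) ∧
        (Module.finrank ℝ (Wk n (Sset n n₁)
            (X (⟨n₁ - 1, by omega⟩ : Fin n) ^ m₁) k) : ℝ) ≤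
          c₂ * (k : ℝ) ^ (n - 1)) ∧
    (∀ m₂ : ℕ,
      ∃ c₁ c₂ : ℝ, 0 < c₁ ∧ 0 < c₂ ∧ ∃ K : ℕ, ∀ k ≥ K,
        c₁ * (k : ℝ) ^ (n - 1) ≤
          (Module.finrank ℝ (Wk n (Sset n n₁)
            (X (⟨n₁, h2⟩ : Fin n) ^ m₂) k) : ℝ) ∧
        (Module.finrank ℝ (Wk n (Sset n n₁)
            (X (⟨n₁, h2⟩ : Fin n) ^ m₂) k) : ℝ) ≤
          c₂ * (k : ℝ) ^ (n - 1)) :=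
  ⟨fun m₁ _ => HoweOscillator.growsLikePow_finrank_Wk h1 h2 _ m₁,
    fun m₂ => HoweOscillator.growsLikePow_finrank_Wk h1 h2 _ m₂⟩
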